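/- (Theorem 4) Let Ω := (Fin n → V) be the assignment space with G a finite subgroup of the permutation group of Fin n acting on Ω by (g • s) i := s (g⁻¹ i), let Q be a G-invariant row-stochastic matrix on Ω, and let P be a G-invariant stationary probability vector for Q. Fix an injective tuple X̂ : Fin k → Fin n, a value x̂ : Fin k → V, and let θ := Σ_{s : s ∘ X̂ = x̂} P(s), H(s) := the number of tuples A in the G-orbit of X̂ (under the action (g • X̂) j := g (X̂ j)) with s ∘ A = x̂, and M := the size of the G-orbit of X̂. Fix ε > 0, an initial state x₀ ∈ Ω, N ≥ 1, and T ∈ ℕ, and suppose T is at least the mixing time τ'(ε) of the quotient chain, i.e., for all x ∈ Ω, all t ≥ T, and summing over the set 𝒪 of G-orbits of Ω: (1/2) Σ_{O ∈ 𝒪} |Σ_{y ∈ O} Q^t(x, y) − Σ_{y ∈ O} P(y)| ≤ ε. Then the bias of the Rao-Blackwell estimator based on the sample points at times T+1, …, T+N of the chain started at x₀ satisfies |(1/N) Σ_{i=1}^N Σ_{s ∈ Ω} Q^{T+i}(x₀, s) · H(s)/M − θ| ≤ ε. -/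

import Mathlib

/-!
The estimator averages `f := H / M`, a `[0, 1]`-valued function constant on `G`-orbits. For
such an `f` and two distributions `μ`, `ν` of equal total mass, subtracting `1/2` from `f` does
not change `E_μ f - E_ν f`, whence `|E_μ f - E_ν f| ≤ (1/2) Σ_O |μ(O) - ν(O)|`. Under `P` the
mean of `f` is exactly `θ`: each tuple `A` in the orbit of `X̂` contributes `P(s ∘ A = x̂)`,
which equals `P(s ∘ X̂ = x̂) = θ` by `G`-invariance of `P`. Hence every time `t ≥ T` contributes
an error at most `ε`, and so does the average over `T+1, …, T+N`.
-/

open scoped Classical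
open Finset

/-- Action of a permutation of `Fin n` on an assignment `s : Fin n → V`:
`(g • s) i := s (g⁻¹ i)`. -/
def permAct {n : ℕ} {V : Type*} (g : Equiv.Perm (Fin n)) (s : Fin n → V) : Fin n → V :=
  fun i => s (g⁻¹ i)

/-- Action of a permutation of `Fin n` on a tuple of indices `X : Fin k → Fin n`:
`(g • X) j := g (X j)`. -/
def tupleAct {n k : ℕ} (g : Equiv.Perm (Fin n)) (X : Fin k → Fin n) : Fin k → Fin n :=
  fun j => g (X j)

/-- The `G`-orbit of an assignment `s`, as a finset of the assignment space. -/
noncomputable def assignOrbit {n : ℕ} {V : Type*} [Fintype V]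
    (G : Subgroup (Equiv.Perm (Fin n))) (s : Fin n → V) : Finset (Fin n → V) :=
  Finset.univ.filter (fun x => ∃ g ∈ G, permAct g s = x)

/-- The `G`-orbit of a tuple of indices, as a finset. -/
noncomputable def tupleOrbit {n k : ℕ} (G : Subgroup (Equiv.Perm (Fin n)))
    (X : Fin k → Fin n) : Finset (Fin k → Fin n) :=
  Finset.univ.filter (fun A => ∃ g ∈ G, tupleAct g X = A)

/-- The orbit Hamming weight of `s` w.r.t. the marginal assignment `X̂ = x̂`:
the number of tuples `A` in the `G`-orbit of `X̂` with `s ∘ A = x̂`. -/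
noncomputable def orbitHammingWeight {n k : ℕ} {V : Type*} [Fintype V] [DecidableEq V]
    (G : Subgroup (Equiv.Perm (Fin n))) (X : Fin k → Fin n) (xhat : Fin k → V)
    (s : Fin n → V) : ℕ :=
  ((tupleOrbit G X).filter (fun A => s ∘ A = xhat)).card

/-- The `t`-th power of a matrix on a finite type:
`Q^0 = identity`, `Q^{t+1}(x,z) = Σ_y Q^t(x,y) · Q(y,z)`. -/
noncomputable def matPow {α : Type*} [Fintype α] (Q : α → α → ℝ) : ℕ → α → α → ℝ
  | 0 => fun x y => if x = y then 1 else 0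
  | t + 1 => fun x z => ∑ y, matPow Q t x y * Q y z

section Partition

variable {α : Type*} [Fintype α] [DecidableEq α] (o : α → Finset α)

theorem sum_sum_image_classes (hself : ∀ s, s ∈ o s)
    (hclass : ∀ s t, t ∈ o s → o t = o s) {M : Type*} [AddCommMonoid M] (h : α → M) :
    ∑ O ∈ univ.image o, ∑ t ∈ O, h t = ∑ s, h s := by
  refine sum_image' h fun c _ => sum_congr ?_ fun _ _ => rfl
  ext t
  simp only [mem_filter, mem_univ, true_and]
  exact ⟨hclass c t, fun ht => ht ▸ hself t⟩

theorem abs_sum_mul_sub_sum_mul_le_half_sum_classes (hself : ∀ s, s ∈ o s)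
    (hclass : ∀ s t, t ∈ o s → o t = o s) {μ ν f : α → ℝ} (hμν : ∑ s, μ s = ∑ s, ν s)
    (hf : ∀ s, f s ∈ Set.Icc (0 : ℝ) 1) (hf_const : ∀ s t, t ∈ o s → f t = f s) :
    |∑ s, μ s * f s - ∑ s, ν s * f s| ≤
      1 / 2 * ∑ O ∈ univ.image o, |∑ y ∈ O, μ y - ∑ y ∈ O, ν y| := by
  set d : α → ℝ := fun s => μ s - ν s
  have hshift : ∑ s, μ s * f s - ∑ s, ν s * f s = ∑ s, d s * (f s - 1 / 2) := by
    simp only [d, sub_mul, mul_sub, sum_sub_distrib, ← sum_mul, hμν]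
    ring
  have horbit : ∀ O ∈ univ.image o,
      |∑ t ∈ O, d t * (f t - 1 / 2)| ≤ 1 / 2 * |∑ y ∈ O, μ y - ∑ y ∈ O, ν y| := by
    intro O hO
    obtain ⟨c, -, rfl⟩ := mem_image.1 hO
    have hfactor : ∑ t ∈ o c, d t * (f t - 1 / 2) = (f c - 1 / 2) * ∑ t ∈ o c, d t := by
      rw [mul_sum]
      exact sum_congr rfl fun t ht => by rw [hf_const c t ht, mul_comm]
    have hcentered : |f c - 1 / 2| ≤ 1 / 2 :=
      abs_le.2 ⟨by linarith [(hf c).1], by linarith [(hf c).2]⟩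
    rw [hfactor, abs_mul, ← sum_sub_distrib]
    exact mul_le_mul_of_nonneg_right hcentered (abs_nonneg _)
  calc |∑ s, μ s * f s - ∑ s, ν s * f s|
      = |∑ O ∈ univ.image o, ∑ t ∈ O, d t * (f t - 1 / 2)| := by
        rw [hshift, sum_sum_image_classes o hself hclass]
    _ ≤ ∑ O ∈ univ.image o, |∑ t ∈ O, d t * (f t - 1 / 2)| := abs_sum_le_sum_abs _ _
    _ ≤ _ := by rw [mul_sum]; exact sum_le_sum horbit

end Partition

theorem abs_one_div_card_mul_sum_sub_le {ι : Type*} {s : Finset ι} (hs : s.Nonempty) {a : ι → ℝ}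
    {θ ε : ℝ} (ha : ∀ i ∈ s, |a i - θ| ≤ ε) :
    |1 / (#s : ℝ) * ∑ i ∈ s, a i - θ| ≤ ε := by
  have hcard : (0 : ℝ) < #s := by exact_mod_cast hs.card_pos
  have hsplit : 1 / (#s : ℝ) * ∑ i ∈ s, a i - θ = 1 / (#s : ℝ) * ∑ i ∈ s, (a i - θ) := by
    rw [sum_sub_distrib, sum_const, nsmul_eq_mul]
    field_simp
  rw [hsplit, abs_mul, abs_of_pos (by positivity), one_div_mul_eq_div, div_le_iff₀ hcard]
  calc |∑ i ∈ s, (a i - θ)| ≤ ∑ i ∈ s, |a i - θ| := abs_sum_le_sum_abs _ _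
    _ ≤ ∑ _i ∈ s, ε := sum_le_sum ha
    _ = ε * #s := by rw [sum_const, nsmul_eq_mul, mul_comm]

theorem sum_matPow_eq_one {α : Type*} [Fintype α] {Q : α → α → ℝ}
    (hQ : ∀ x, ∑ y, Q x y = 1) (t : ℕ) (x : α) : ∑ y, matPow Q t x y = 1 := by
  induction t with
  | zero => simp [matPow]
  | succ t ih =>
    simp only [matPow]
    rw [sum_comm]
    simp only [← mul_sum, hQ, mul_one, ih]

section Orbits

variable {n k : ℕ} {V : Type*} {G : Subgroup (Equiv.Perm (Fin n))}

theorem permAct_mul (g h : Equiv.Perm (Fin n)) (s : Fin n → V) :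
    permAct (g * h) s = permAct g (permAct h s) := by
  funext i; simp [permAct, mul_inv_rev]

theorem permAct_one (s : Fin n → V) : permAct 1 s = s := rfl

theorem permAct_comp_tupleAct (g : Equiv.Perm (Fin n)) (s : Fin n → V) (X : Fin k → Fin n) :
    permAct g s ∘ tupleAct g X = s ∘ X := by
  funext j; simp [permAct, tupleAct]

theorem tupleAct_mul (g h : Equiv.Perm (Fin n)) (X : Fin k → Fin n) :
    tupleAct (g * h) X = tupleAct g (tupleAct h X) := rfl

theorem tupleAct_one (X : Fin k → Fin n) : tupleAct 1 X = X := rfl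

variable [Fintype V]

theorem mem_assignOrbit_self (s : Fin n → V) : s ∈ assignOrbit G s := by
  simpa [assignOrbit] using ⟨1, G.one_mem, permAct_one s⟩

theorem assignOrbit_eq_of_mem {s t : Fin n → V} (ht : t ∈ assignOrbit G s) :
    assignOrbit G t = assignOrbit G s := by
  simp only [assignOrbit, mem_filter, mem_univ, true_and] at ht ⊢
  obtain ⟨g, hg, rfl⟩ := ht
  ext x
  simp only [mem_filter, mem_univ, true_and]
  constructor
  · rintro ⟨h, hh, rfl⟩
    exact ⟨h * g, G.mul_mem hh hg, permAct_mul h g s⟩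
  · rintro ⟨h, hh, rfl⟩
    refine ⟨h * g⁻¹, G.mul_mem hh (G.inv_mem hg), ?_⟩
    rw [permAct_mul h g⁻¹, ← permAct_mul g⁻¹ g, inv_mul_cancel, permAct_one]

theorem mem_tupleOrbit_self (X : Fin k → Fin n) : X ∈ tupleOrbit G X := by
  simpa [tupleOrbit] using ⟨1, G.one_mem, tupleAct_one X⟩

theorem tupleAct_mem_tupleOrbit {g : Equiv.Perm (Fin n)} (hg : g ∈ G) {X A : Fin k → Fin n}
    (hA : A ∈ tupleOrbit G X) : tupleAct g A ∈ tupleOrbit G X := by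
  simp only [tupleOrbit, mem_filter, mem_univ, true_and] at hA ⊢
  obtain ⟨h, hh, rfl⟩ := hA
  exact ⟨g * h, G.mul_mem hg hh, tupleAct_mul g h X⟩

variable [DecidableEq V]

theorem orbitHammingWeight_permAct {g : Equiv.Perm (Fin n)} (hg : g ∈ G)
    (X : Fin k → Fin n) (xhat : Fin k → V) (s : Fin n → V) :
    orbitHammingWeight G X xhat (permAct g s) = orbitHammingWeight G X xhat s := by
  refine card_nbij' (tupleAct g⁻¹) (tupleAct g) ?_ ?_ ?_ ?_
  · intro A hA
    simp only [mem_coe, mem_filter] at hA ⊢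
    refine ⟨tupleAct_mem_tupleOrbit (G.inv_mem hg) hA.1, ?_⟩
    rw [← hA.2, ← permAct_comp_tupleAct g s, ← tupleAct_mul, mul_inv_cancel, tupleAct_one]
  · intro A hA
    simp only [mem_coe, mem_filter] at hA ⊢
    exact ⟨tupleAct_mem_tupleOrbit hg hA.1, by rw [permAct_comp_tupleAct, hA.2]⟩
  · intro A _
    rw [← tupleAct_mul, mul_inv_cancel, tupleAct_one]
  · intro A _
    rw [← tupleAct_mul, inv_mul_cancel, tupleAct_one]

theorem orbitHammingWeight_le_card (X : Fin k → Fin n) (xhat : Fin k → V) (s : Fin n → V) :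
    orbitHammingWeight G X xhat s ≤ #(tupleOrbit G X) :=
  card_filter_le _ _

theorem sum_filter_comp_tupleAct_eq {P : (Fin n → V) → ℝ}
    (hPG : ∀ g ∈ G, ∀ s : Fin n → V, P (permAct g s) = P s) {g : Equiv.Perm (Fin n)} (hg : g ∈ G)
    (X : Fin k → Fin n) (xhat : Fin k → V) :
    ∑ s with s ∘ tupleAct g X = xhat, P s = ∑ s with s ∘ X = xhat, P s := by
  refine sum_nbij' (permAct g⁻¹) (permAct g) ?_ ?_ ?_ ?_ ?_
  · intro s hs
    simp only [mem_filter, mem_univ, true_and] at hs ⊢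
    rw [← hs, ← permAct_comp_tupleAct g, ← permAct_mul, mul_inv_cancel, permAct_one]
  · intro s hs
    simp only [mem_filter, mem_univ, true_and] at hs ⊢
    rw [permAct_comp_tupleAct, hs]
  · intro s _
    rw [← permAct_mul, mul_inv_cancel, permAct_one]
  · intro s _
    rw [← permAct_mul, inv_mul_cancel, permAct_one]
  · intro s _
    rw [hPG g⁻¹ (G.inv_mem hg)]

theorem sum_mul_orbitHammingWeight {P : (Fin n → V) → ℝ}
    (hPG : ∀ g ∈ G, ∀ s : Fin n → V, P (permAct g s) = P s)
    (X : Fin k → Fin n) (xhat : Fin k → V) :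
    ∑ s, P s * orbitHammingWeight G X xhat s =
      #(tupleOrbit G X) * ∑ s with s ∘ X = xhat, P s := by
  have hweight : ∀ s, (orbitHammingWeight G X xhat s : ℝ) =
      ∑ A ∈ tupleOrbit G X, if s ∘ A = xhat then 1 else 0 := by
    intro s
    rw [orbitHammingWeight, card_filter, Nat.cast_sum]
    push_cast
    rfl
  calc ∑ s, P s * orbitHammingWeight G X xhat s
      = ∑ A ∈ tupleOrbit G X, ∑ s with s ∘ A = xhat, P s := by
        simp only [hweight, mul_sum, mul_ite, mul_one, mul_zero]
        rw [sum_comm]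
        simp only [sum_ite, sum_const_zero, add_zero]
    _ = ∑ _A ∈ tupleOrbit G X, ∑ s with s ∘ X = xhat, P s := by
        refine sum_congr rfl fun A hA => ?_
        simp only [tupleOrbit, mem_filter, mem_univ, true_and] at hA
        obtain ⟨g, hg, rfl⟩ := hA
        exact sum_filter_comp_tupleAct_eq hPG hg X xhat
    _ = _ := by rw [sum_const, nsmul_eq_mul]

end Orbits

theorem rao_blackwell_bias_le_of_quotient_mixing_general
    (n k : ℕ)
    (V : Type*) [Fintype V] [DecidableEq V]
    (G : Subgroup (Equiv.Perm (Fin n)))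
    (Q : (Fin n → V) → (Fin n → V) → ℝ)
    (hQ1 : ∀ x, ∑ y, Q x y = 1)
    (P : (Fin n → V) → ℝ)
    (hP1 : ∑ s : Fin n → V, P s = 1)
    (hPG : ∀ g ∈ G, ∀ s : Fin n → V, P (permAct g s) = P s)
    (Xhat : Fin k → Fin n)
    (xhat : Fin k → V)
    (ε : ℝ)
    (x₀ : Fin n → V) (N : ℕ) (hN : 1 ≤ N) (T : ℕ)
    (hT : ∀ x : Fin n → V, ∀ t ≥ T,
      (1 / 2) * ∑ O ∈ Finset.univ.image (fun s : Fin n → V => assignOrbit G s),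
        |(∑ y ∈ O, matPow Q t x y) - ∑ y ∈ O, P y| ≤ ε) :
    |(1 / (N : ℝ)) * (∑ i ∈ Finset.Icc 1 N,
        ∑ s : Fin n → V, matPow Q (T + i) x₀ s *
          ((orbitHammingWeight G Xhat xhat s : ℝ) / ((tupleOrbit G Xhat).card : ℝ))) -
      ∑ s ∈ Finset.univ.filter (fun s : Fin n → V => s ∘ Xhat = xhat), P s| ≤ ε := by
  set M : ℝ := (#(tupleOrbit G Xhat) : ℝ)
  set f : (Fin n → V) → ℝ := fun s => orbitHammingWeight G Xhat xhat s / M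
  have hM : 0 < M := Nat.cast_pos.2 (card_pos.2 ⟨Xhat, mem_tupleOrbit_self Xhat⟩)
  have hf : ∀ s, f s ∈ Set.Icc (0 : ℝ) 1 := fun s =>
    ⟨by positivity, (div_le_one hM).2 (Nat.cast_le.2 (orbitHammingWeight_le_card Xhat xhat s))⟩
  have hf_const : ∀ s t, t ∈ assignOrbit G s → f t = f s := by
    intro s t ht
    simp only [assignOrbit, mem_filter, mem_univ, true_and] at ht
    obtain ⟨g, hg, rfl⟩ := ht
    simp only [f, orbitHammingWeight_permAct hg]
  have hPf : ∑ s, P s * f s = ∑ s with s ∘ Xhat = xhat, P s := by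
    simp only [f, mul_div_assoc', ← sum_div, sum_mul_orbitHammingWeight hPG]
    exact mul_div_cancel_left₀ _ hM.ne'
  have hterm : ∀ t ≥ T, |∑ s, matPow Q t x₀ s * f s - ∑ s with s ∘ Xhat = xhat, P s| ≤ ε := by
    intro t ht
    rw [← hPf]
    refine (abs_sum_mul_sub_sum_mul_le_half_sum_classes (assignOrbit G) mem_assignOrbit_self
      (fun _ _ => assignOrbit_eq_of_mem) ?_ hf hf_const).trans (hT x₀ t ht)
    rw [sum_matPow_eq_one hQ1, hP1]
  have hN' : (N : ℝ) = #(Icc 1 N) := by simp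
  rw [hN']
  exact abs_one_div_card_mul_sum_sub_le (nonempty_Icc.2 hN) fun i _ =>
    hterm (T + i) (Nat.le_add_right T i)

/-- Theorem 4: if the burn-in time `T` is at least the mixing time of the
quotient chain, then the bias of the Rao-Blackwell estimator based on the sample points
at times `T+1, …, T+N` of the chain started at `x₀` is at most `ε` in absolute value. -/
theorem rao_blackwell_bias_le_of_quotient_mixing
    (n k : ℕ) (hn : 0 < n) (hk : 0 < k)
    (V : Type*) [Fintype V] [Nonempty V] [DecidableEq V]
    (G : Subgroup (Equiv.Perm (Fin n)))
    (Q : (Fin n → V) → (Fin n → V) → ℝ)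
    (hQ0 : ∀ x y, 0 ≤ Q x y)
    (hQ1 : ∀ x, ∑ y, Q x y = 1)
    (hQG : ∀ g ∈ G, ∀ x y : Fin n → V, Q (permAct g x) (permAct g y) = Q x y)
    (P : (Fin n → V) → ℝ)
    (hP0 : ∀ s, 0 ≤ P s)
    (hP1 : ∑ s : Fin n → V, P s = 1)
    (hPstat : ∀ y : Fin n → V, ∑ x : Fin n → V, P x * Q x y = P y)
    (hPG : ∀ g ∈ G, ∀ s : Fin n → V, P (permAct g s) = P s)
    (Xhat : Fin k → Fin n) (hX : Function.Injective Xhat)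
    (xhat : Fin k → V)
    (ε : ℝ) (hε : 0 < ε)
    (x₀ : Fin n → V) (N : ℕ) (hN : 1 ≤ N) (T : ℕ)
    (hT : ∀ x : Fin n → V, ∀ t ≥ T,
      (1 / 2) * ∑ O ∈ Finset.univ.image (fun s : Fin n → V => assignOrbit G s),
        |(∑ y ∈ O, matPow Q t x y) - ∑ y ∈ O, P y| ≤ ε) :
    |(1 / (N : ℝ)) * (∑ i ∈ Finset.Icc 1 N,
        ∑ s : Fin n → V, matPow Q (T + i) x₀ s *
          ((orbitHammingWeight G Xhat xhat s : ℝ) / ((tupleOrbit G Xhat).card : ℝ))) -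
      ∑ s ∈ Finset.univ.filter (fun s : Fin n → V => s ∘ Xhat = xhat), P s| ≤ ε :=
  rao_blackwell_bias_le_of_quotient_mixing_general n k V G Q hQ1 P hP1 hPG Xhat xhat ε x₀ N hN T hT
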